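/- Suppose (y₁,y₂) is a saddle point of φ(z₁,z₂) = f̄(z₁) + z₂ᵀḡ(z₁) over z₁ ∈ Y₁, z₂ ∈ [0,B]ˡ, where B > L_f̄ D / G, f̄ is L_f̄-Lipschitz on Y₁ with diameter D, and there exists ŷ ∈ Y₁ with ḡᵢ(ŷ) ≤ −G for all i. Then ḡ(y₁) ≤ 0 componentwise, y₂ᵀḡ(y₁) = 0, and y₁ minimizes f̄ over {z : ḡ(z) ≤ 0}. -/
import Mathlib


/-- If `(y₁, y₂)` is a saddle point of `φ(z₁, z₂) = f̄(z₁) + z₂ᵀḡ(z₁)` over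
`z₁ ∈ Y₁`, `z₂ ∈ [0,B]^l`, where `B > L * D / G`, `f̄` is `L`-Lipschitz on `Y₁` of
diameter `D`, and there is a Slater point `ŷ` with `ḡᵢ(ŷ) ≤ -G`, then `ḡ(y₁) ≤ 0`
componentwise, `y₂ᵀḡ(y₁) = 0`, and `y₁` minimizes `f̄` over the feasible set. -/
theorem box_saddle_implies_lower_level_optimal {E : Type*}
    [NormedAddCommGroup E] [NormedSpace ℝ E]
    (l : ℕ) (Y₁ : Set E) (f : E → ℝ) (g : E → Fin l → ℝ)
    (L D G B : ℝ) (hG : 0 < G) (hB : L * D / G < B)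
    (hconv : Convex ℝ Y₁) (hcomp : IsCompact Y₁)
    (hlip : ∀ u ∈ Y₁, ∀ v ∈ Y₁, |f u - f v| ≤ L * ‖u - v‖)
    (hdiam : ∀ u ∈ Y₁, ∀ v ∈ Y₁, ‖u - v‖ ≤ D)
    (yhat : E) (hyhat : yhat ∈ Y₁) (hslater : ∀ i, g yhat i ≤ -G)
    (y₁ : E) (hy₁ : y₁ ∈ Y₁)
    (y₂ : Fin l → ℝ) (hy₂ : ∀ i, y₂ i ∈ Set.Icc (0 : ℝ) B)
    (hsaddle₁ : ∀ z₂ : Fin l → ℝ, (∀ i, z₂ i ∈ Set.Icc (0 : ℝ) B) →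
      f y₁ + ∑ i, z₂ i * g y₁ i ≤ f y₁ + ∑ i, y₂ i * g y₁ i)
    (hsaddle₂ : ∀ z₁ ∈ Y₁,
      f y₁ + ∑ i, y₂ i * g y₁ i ≤ f z₁ + ∑ i, y₂ i * g z₁ i) :
    (∀ i, g y₁ i ≤ 0) ∧ (∑ i, y₂ i * g y₁ i) = 0 ∧
      (∀ z ∈ Y₁, (∀ i, g z i ≤ 0) → f y₁ ≤ f z) := by

  -- S := ∑ y₂ i * g y₁ i is nonnegative (take z₂ = 0 in hsaddle₁)
  have hSnn : 0 ≤ ∑ i, y₂ i * g y₁ i := by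
    have h := hsaddle₁ (fun _ => 0) (fun i => ⟨le_refl 0, by simpa using (hy₂ i).1.trans (hy₂ i).2⟩)
    simp at h
    linarith
  -- key: g y₁ i ≤ 0 for all i
  have hkey : ∀ i, g y₁ i ≤ 0 := by
    rcases lt_or_ge L 0 with hL | hL
    · -- L < 0 forces yhat = y₁
      have heq : yhat = y₁ := by
        by_contra hne
        have hpos : 0 < ‖yhat - y₁‖ := by
          simp [norm_pos_iff, sub_eq_zero, hne]
        have h1 := hlip yhat hyhat y₁ hy₁
        nlinarith [abs_nonneg (f yhat - f y₁)]
      intro i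
      have := hslater i
      rw [heq] at this
      linarith
    · -- L ≥ 0: show ∑ y₂ ≤ L*D/G < B, hence y₂ j < B, perturb
      have hsum : G * ∑ i, y₂ i ≤ L * D := by
        have h2 := hsaddle₂ yhat hyhat
        have h3 : ∑ i, y₂ i * g yhat i ≤ ∑ i, y₂ i * (-G) := by
          apply Finset.sum_le_sum
          intro i _
          exact mul_le_mul_of_nonneg_left (hslater i) (hy₂ i).1
        have h4 : f yhat - f y₁ ≤ L * ‖yhat - y₁‖ :=
          (le_abs_self _).trans (by
            have := hlip yhat hyhat y₁ hy₁
            linarith [abs_sub_comm (f yhat) (f y₁)])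
        have h5 : L * ‖yhat - y₁‖ ≤ L * D :=
          mul_le_mul_of_nonneg_left (hdiam yhat hyhat y₁ hy₁) hL
        have h6 : ∑ i, y₂ i * (-G) = -(G * ∑ i, y₂ i) := by
          rw [Finset.mul_sum]
          simp [mul_comm]
        nlinarith
      have hsumB : ∑ i, y₂ i < B := by
        have : ∑ i, y₂ i ≤ L * D / G := (le_div_iff₀ hG).mpr (by linarith [mul_comm G (∑ i, y₂ i)])
        linarith
      intro j
      by_contra hgj
      push_neg at hgj
      have hjB : y₂ j < B := by
        have : y₂ j ≤ ∑ i, y₂ i :=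
          Finset.single_le_sum (fun i _ => (hy₂ i).1) (Finset.mem_univ j)
        linarith
      set z₂ : Fin l → ℝ := Function.update y₂ j B with hz₂
      have hz₂mem : ∀ i, z₂ i ∈ Set.Icc (0 : ℝ) B := by
        intro i
        by_cases hij : i = j
        · subst hij
          simp [hz₂, Function.update_self]
          exact le_of_lt (lt_of_le_of_lt (hy₂ i).1 hjB)
        · simp [hz₂, Function.update_of_ne hij]
          exact hy₂ i
      have h := hsaddle₁ z₂ hz₂mem
      have hdiff : ∑ i, z₂ i * g y₁ i - ∑ i, y₂ i * g y₁ i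
          = (B - y₂ j) * g y₁ j := by
        rw [← Finset.sum_sub_distrib]
        rw [Finset.sum_eq_single j]
        · simp [hz₂, Function.update_self]
          ring
        · intro i _ hij
          simp [hz₂, Function.update_of_ne hij]
        · simp
      nlinarith
  -- S = 0
  have hSle : ∑ i, y₂ i * g y₁ i ≤ 0 :=
    Finset.sum_nonpos (fun i _ => mul_nonpos_of_nonneg_of_nonpos (hy₂ i).1 (hkey i))
  have hS0 : (∑ i, y₂ i * g y₁ i) = 0 := le_antisymm hSle hSnn
  refine ⟨hkey, hS0, ?_⟩
  intro z hz hgz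
  have h := hsaddle₂ z hz
  have : ∑ i, y₂ i * g z i ≤ 0 :=
    Finset.sum_nonpos (fun i _ => mul_nonpos_of_nonneg_of_nonpos (hy₂ i).1 (hgz i))
  rw [hS0] at h
  linarith
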